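/- arXiv:1309.6097 — 2 statements merged into one kernel-verified Lean document; each statement's English description precedes it below -/
import Mathlib

section
/- Let $G$ be a group with a bi-invariant mean and let $H \le G$ have infinite index. If $T, T' \subseteq G$ are finite sets, then $G \neq T^{-1} H T'$, i.e., the union of the finitely many double translates $t^{-1} H t'$ for $t \in T$, $t' \in T'$ does not cover $G$. -/
/-- The space `ℓ∞(G)` of bounded real-valued functions on `G`, as a submodule of `G → ℝ`. -/
def Linf (G : Type*) : Submodule ℝ (G → ℝ) where
  carrier := {f | ∃ C : ℝ, ∀ x, |f x| ≤ C}
  add_mem' := by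
    rintro f g ⟨C, hC⟩ ⟨D, hD⟩
    exact ⟨C + D, fun x => by
      simpa using (abs_add_le (f x) (g x)).trans (add_le_add (hC x) (hD x))⟩
  zero_mem' := ⟨0, fun x => by simp⟩
  smul_mem' := by
    rintro c f ⟨C, hC⟩
    exact ⟨|c| * C, fun x => by
      simpa [abs_mul] using mul_le_mul_of_nonneg_left (hC x) (abs_nonneg c)⟩

open Classical in
/-- The characteristic function of a set, as an element of `ℓ∞`. -/
noncomputable def chi {G : Type*} (A : Set G) : Linf G :=
  ⟨fun x => if x ∈ A then 1 else 0, ⟨1, fun x => by by_cases h : x ∈ A <;> simp [h]⟩⟩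

/-- Left translation action on `ℓ∞(G)`: `(g • φ)(x) = φ(g⁻¹ x)`. -/
def lT {G : Type*} [Group G] (g : G) (φ : Linf G) : Linf G :=
  ⟨fun x => (φ : G → ℝ) (g⁻¹ * x), by obtain ⟨C, hC⟩ := φ.2; exact ⟨C, fun x => hC _⟩⟩

/-- Right translation action on `ℓ∞(G)`: `(φ • g)(x) = φ(x g)`. -/
def rT {G : Type*} [Group G] (g : G) (φ : Linf G) : Linf G :=
  ⟨fun x => (φ : G → ℝ) (x * g), by obtain ⟨C, hC⟩ := φ.2; exact ⟨C, fun x => hC _⟩⟩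

/-- A mean on `G`: a normalized positive linear functional on `ℓ∞(G)`. -/
structure Mean (G : Type*) where
  toFun : Linf G →ₗ[ℝ] ℝ
  normalized : toFun (chi Set.univ) = 1
  pos : ∀ φ : Linf G, (∀ x, 0 ≤ (φ : G → ℝ) x) → 0 ≤ toFun φ

/-- A mean is left invariant if it is invariant under left translations. -/
def Mean.LeftInvariant {G : Type*} [Group G] (m : Mean G) : Prop :=
  ∀ (g : G) (φ : Linf G), m.toFun (lT g φ) = m.toFun φ

/-- A mean is right invariant if it is invariant under right translations. -/
def Mean.RightInvariant {G : Type*} [Group G] (m : Mean G) : Prop :=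
  ∀ (g : G) (φ : Linf G), m.toFun (rT g φ) = m.toFun φ

/-!
The mean induces a finitely additive probability measure `μ A = m (χ_A)` on `G`, invariant under
left and right translations. A subgroup `H` of infinite index has arbitrarily many pairwise
disjoint left cosets, each of measure `μ H` and together of measure at most `1`, so `μ H = 0`.
By bi-invariance every double translate `t⁻¹ H t'` is null as well, and finitely many null sets
cannot cover `G`, which has measure `1`.
-/

section

variable {G : Type*}

theorem coe_chi (A : Set G) : (chi A : G → ℝ) = A.indicator 1 := rfl

theorem lT_chi [Group G] (g : G) (A : Set G) : lT g (chi A) = chi ((g⁻¹ * ·) ⁻¹' A) := rfl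

theorem rT_chi [Group G] (g : G) (A : Set G) : rT g (chi A) = chi ((· * g) ⁻¹' A) := rfl

namespace Mean

variable (m : Mean G)

noncomputable def measure (A : Set G) : ℝ := m.toFun (chi A)

theorem toFun_mono {φ ψ : Linf G} (h : (φ : G → ℝ) ≤ ψ) : m.toFun φ ≤ m.toFun ψ := by
  have := m.pos (ψ - φ) fun x => sub_nonneg.mpr (h x)
  rwa [map_sub, sub_nonneg] at this

theorem measure_univ : m.measure Set.univ = 1 := m.normalized

theorem measure_nonneg (A : Set G) : 0 ≤ m.measure A :=
  m.pos _ fun x => by simp only [coe_chi]; exact Set.indicator_nonneg (fun _ _ => zero_le_one) x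

theorem measure_mono {A B : Set G} (h : A ⊆ B) : m.measure A ≤ m.measure B :=
  m.toFun_mono <| by
    simp only [coe_chi]
    exact Set.indicator_le_indicator_of_subset h fun _ => zero_le_one

theorem measure_biUnion_le {ι : Type*} (s : Finset ι) (A : ι → Set G) :
    m.measure (⋃ i ∈ s, A i) ≤ ∑ i ∈ s, m.measure (A i) := by
  simp only [measure, ← map_sum]
  refine m.toFun_mono fun x => ?_
  simp only [Submodule.coe_sum, Finset.sum_apply, coe_chi]
  by_cases hx : x ∈ ⋃ i ∈ s, A i
  · obtain ⟨i, hi, hxi⟩ := Set.mem_iUnion₂.mp hx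
    rw [Set.indicator_of_mem hx]
    calc (1 : G → ℝ) x = (A i).indicator 1 x := (Set.indicator_of_mem hxi _).symm
      _ ≤ _ := Finset.single_le_sum
        (fun j _ => Set.indicator_nonneg (fun _ _ => zero_le_one) x) hi
  · rw [Set.indicator_of_notMem hx]
    exact Finset.sum_nonneg fun j _ => Set.indicator_nonneg (fun _ _ => zero_le_one) x

theorem measure_biUnion {ι : Type*} (s : Finset ι) (A : ι → Set G)
    (hA : (s : Set ι).PairwiseDisjoint A) :
    m.measure (⋃ i ∈ s, A i) = ∑ i ∈ s, m.measure (A i) := by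
  simp only [measure, ← map_sum]
  congr 1
  ext x
  simp only [Submodule.coe_sum, Finset.sum_apply, coe_chi]
  exact Finset.indicator_biUnion_apply s A hA x

variable [Group G] {m}

theorem LeftInvariant.measure_preimage_mul_left (hml : m.LeftInvariant) (g : G) (A : Set G) :
    m.measure ((g * ·) ⁻¹' A) = m.measure A := by
  simpa [measure, lT_chi] using hml g⁻¹ (chi A)

theorem RightInvariant.measure_preimage_mul_right (hmr : m.RightInvariant) (g : G) (A : Set G) :
    m.measure ((· * g) ⁻¹' A) = m.measure A := by
  simpa [measure, rT_chi] using hmr g (chi A)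

theorem LeftInvariant.card_mul_measure_subgroup_le (hml : m.LeftInvariant) (H : Subgroup G)
    (s : Finset (G ⧸ H)) : s.card * m.measure H ≤ 1 := by
  have hcoset (q : G ⧸ H) :
      (QuotientGroup.mk ⁻¹' {q} : Set G) = (q.out⁻¹ * ·) ⁻¹' H := by
    ext x
    rw [Set.mem_preimage, Set.mem_singleton_iff, Set.mem_preimage, SetLike.mem_coe,
      ← QuotientGroup.eq, QuotientGroup.out_eq', eq_comm]
  have hdisj : (s : Set (G ⧸ H)).PairwiseDisjoint (QuotientGroup.mk ⁻¹' {·}) :=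
    fun _ _ _ _ hne => Set.disjoint_singleton.mpr hne |>.preimage _
  calc s.card * m.measure H = ∑ q ∈ s, m.measure (QuotientGroup.mk ⁻¹' {q}) := by
        simp [hcoset, hml.measure_preimage_mul_left]
    _ = m.measure (⋃ q ∈ s, QuotientGroup.mk ⁻¹' {q}) := (m.measure_biUnion s _ hdisj).symm
    _ ≤ m.measure Set.univ := m.measure_mono (Set.subset_univ _)
    _ = 1 := m.measure_univ

theorem LeftInvariant.measure_subgroup_eq_zero (hml : m.LeftInvariant) (H : Subgroup G)
    [Infinite (G ⧸ H)] : m.measure H = 0 := by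
  by_contra hne
  have hpos : 0 < m.measure H := (m.measure_nonneg _).lt_of_ne' hne
  obtain ⟨n, hn⟩ := exists_nat_gt (m.measure H)⁻¹
  obtain ⟨s, rfl⟩ := Infinite.exists_subset_card_eq (G ⧸ H) n
  have h_one_lt := (inv_lt_iff_one_lt_mul₀ hpos).mp hn
  linarith [hml.card_mul_measure_subgroup_le H s]

end Mean

end

/-- If `G` has a bi-invariant mean and `H ≤ G` has infinite index, then
for finite `T, T' ⊆ G` the union of the double translates `t⁻¹ H t'` does not cover `G`,
i.e. `G ≠ T⁻¹ H T'`. -/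
theorem not_covered_by_double_translates {G : Type*} [Group G] (m : Mean G)
    (hml : m.LeftInvariant) (hmr : m.RightInvariant)
    (H : Subgroup G) (hH : Infinite (G ⧸ H))
    (T T' : Set G) (hT : T.Finite) (hT' : T'.Finite) :
    ∃ g : G, ∀ t ∈ T, ∀ t' ∈ T', ∀ h ∈ H, g ≠ t⁻¹ * h * t' := by
  by_contra! hcover
  -- `D (t, t')` is the double translate `t⁻¹ H t'`.
  let D : G × G → Set G := fun p => (· * p.2⁻¹) ⁻¹' ((p.1 * ·) ⁻¹' H)
  have hD_null (p : G × G) : m.measure (D p) = 0 := by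
    rw [hmr.measure_preimage_mul_right, hml.measure_preimage_mul_left,
      hml.measure_subgroup_eq_zero]
  have hD_cover : Set.univ ⊆ ⋃ p ∈ (hT.prod hT').toFinset, D p := fun x _ => by
    obtain ⟨t, ht, t', ht', h, hh, rfl⟩ := hcover x
    refine Set.mem_biUnion (x := (t, t')) ((hT.prod hT').mem_toFinset.mpr ⟨ht, ht'⟩) ?_
    simpa [D, mul_assoc]
  refine (zero_lt_one (α := ℝ)).not_ge ?_
  calc (1 : ℝ) = m.measure Set.univ := m.measure_univ.symm
    _ ≤ ∑ p ∈ (hT.prod hT').toFinset, m.measure (D p) :=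
      (m.measure_mono hD_cover).trans (m.measure_biUnion_le _ D)
    _ = 0 := Finset.sum_eq_zero fun p _ => hD_null p
end

section
/- Let $G$ be a finitely generated amenable group with F\o lner sequence $S = (S_j)$, and let $(c_n)_{n\in\mathbb{N}}$ be a sequence in $\ell^\infty(G)$ such that, setting $\beta_n(j) = |\sum_{s\in S_j} c_n(s)|/|S_j|$ and $\sigma(j) = |\partial_1 S_j|/|S_j|$, we have $\sigma \prec \beta_0$ and $\beta_n \prec \beta_{n+1}$ for all $n$ (where $\alpha \prec \beta$ means $\alpha(j)/\beta(j) \to 0$). Then the classes $[c_n]$ are linearly independent in $H_0^{uf}(G;\mathbb{R})$: no nontrivial finite real linear combination $\sum a_n c_n$ is a boundary in the uniformly finite chain complex. -/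
/-!
Suppose `∑ aᵢ cᵢ = ∂b` with `b` bounded by `C` and supported on pairs at distance `≤ R`.
Summing over a finite set `F`, the terms inside `F × F` cancel, so only pairs `(x, y)` with
`x ∈ F`, `y ∉ F`, `d(x, y) ≤ R` contribute. A geodesic from `x` to `y` leaves `F` through a
point `p ∈ ∂₁F` with `x, y ∈ B(p, R)`, so there are at most `|∂₁F| · |B_R|²` such pairs and
`|∑_F ∑ aᵢ cᵢ| ≤ M |∂₁F|` (the easy half of Whyte's criterion).

Dividing by `|S_j|`, the normalised sums `Bᵢ(j) = (∑_{S_j} cᵢ) / |S_j|` satisfy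
`∑ aᵢ Bᵢ = O(σ)`, while `σ = o(B₀)` and `Bₙ = o(Bₙ₊₁)`. If `a_m` is the last coefficient, every
other term is `o(B_m)`, hence so is `a_m B_m`, which forces `a_m = 0`; induct on the number of
coefficients.
-/

/-- The word distance on a group `G` with respect to a generating set `Sg`:
`d(g,h)` is the minimal length of a word in `Sg ∪ Sg⁻¹` representing `g⁻¹h`. -/
noncomputable def wordDist {G : Type*} [Group G] (Sg : Set G) (g h : G) : ℕ :=
  sInf {n | ∃ w : List G, w.length = n ∧ (∀ x ∈ w, x ∈ Sg ∨ x⁻¹ ∈ Sg) ∧ w.prod = g⁻¹ * h}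

/-- The closed ball of radius `r` around `g` in the word metric. -/
noncomputable def wball {G : Type*} [Group G] (Sg : Set G) (g : G) (r : ℕ) : Set G :=
  {x | wordDist Sg g x ≤ r}

/-- The `r`-boundary `∂_r A = {g : 0 < d(g, A) ≤ r}` of a set `A`. -/
noncomputable def rBoundary {G : Type*} [Group G] (Sg : Set G) (r : ℕ) (A : Set G) : Set G :=
  {g | g ∉ A ∧ ∃ a ∈ A, wordDist Sg a g ≤ r}

/-- A Følner sequence: a sequence of nonempty finite subsets whose `r`-boundaries are
asymptotically negligible for every `r > 0`. -/
def IsFolner {G : Type*} [Group G] (Sg : Set G) (S : ℕ → Finset G) : Prop :=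
  (∀ j, (S j).Nonempty) ∧ ∀ r : ℕ, 0 < r →
    Filter.Tendsto (fun j => ((rBoundary Sg r (S j : Set G)).ncard : ℝ) / (S j).card)
      Filter.atTop (nhds 0)

/-- `c : G → ℝ` is a boundary in the degree-zero uniformly finite chain complex: there is
a bounded `1`-chain `b : G² → ℝ`, supported on pairs of uniformly bounded distance, with
`∂₁ b = c`, where `∂₁ b (x) = ∑_y b(y,x) - ∑_y b(x,y)`. -/
noncomputable def IsUFBoundary {G : Type*} [Group G] (Sg : Set G) (c : G → ℝ) : Prop :=
  ∃ b : G × G → ℝ,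
    (∃ C : ℝ, ∀ p, |b p| ≤ C) ∧
    (∃ R : ℕ, ∀ p : G × G, R < wordDist Sg p.1 p.2 → b p = 0) ∧
    ∀ x : G, c x = (∑ᶠ y, b (y, x)) - (∑ᶠ y, b (x, y))

open Filter Topology Asymptotics
open scoped Pointwise

theorem sum_finsum_sub_finsum_eq_sum_sdiff {α M : Type*} [DecidableEq α] [AddCommGroup M]
    (b : α × α → M) {F U : Finset α} (hFU : F ⊆ U)
    (hU : ∀ x ∈ F, ∀ y ∉ U, b (y, x) = 0 ∧ b (x, y) = 0) :
    ∑ x ∈ F, ((∑ᶠ y, b (y, x)) - ∑ᶠ y, b (x, y)) =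
      ∑ x ∈ F, ∑ y ∈ U \ F, (b (y, x) - b (x, y)) := by
  have hfinsum : ∀ x ∈ F, (∑ᶠ y, b (y, x)) - ∑ᶠ y, b (x, y) =
      ∑ y ∈ U \ F, (b (y, x) - b (x, y)) + ∑ y ∈ F, (b (y, x) - b (x, y)) := by
    intro x hx
    rw [Finset.sum_sdiff hFU, Finset.sum_sub_distrib,
      finsum_eq_sum_of_support_subset _ (s := U) fun y hy => ?_,
      finsum_eq_sum_of_support_subset _ (s := U) fun y hy => ?_]
    exacts [by_contra fun h => hy (hU x hx y h).2, by_contra fun h => hy (hU x hx y h).1]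
  have hcancel : ∑ x ∈ F, ∑ y ∈ F, (b (y, x) - b (x, y)) = 0 := by
    simp only [Finset.sum_sub_distrib]
    rw [Finset.sum_comm, sub_self]
  rw [Finset.sum_congr rfl hfinsum, Finset.sum_add_distrib, hcancel, add_zero]

section WordMetric
variable {G : Type*} [Group G] {Sg : Set G}

def wordLengths (Sg : Set G) (g h : G) : Set ℕ :=
  {n | ∃ w : List G, w.length = n ∧ (∀ t ∈ w, t ∈ Sg ∨ t⁻¹ ∈ Sg) ∧ w.prod = g⁻¹ * h}

theorem wordDist_eq_sInf_wordLengths (g h : G) :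
    wordDist Sg g h = sInf (wordLengths Sg g h) :=
  rfl

theorem wordDist_mul_prod_le {w : List G} (hw : ∀ t ∈ w, t ∈ Sg ∨ t⁻¹ ∈ Sg) (g : G) :
    wordDist Sg g (g * w.prod) ≤ w.length :=
  Nat.sInf_le ⟨w, rfl, hw, by group⟩

theorem exists_word_length_eq_wordDist (hgen : Subgroup.closure Sg = ⊤) (g h : G) :
    ∃ w : List G, w.length = wordDist Sg g h ∧ (∀ t ∈ w, t ∈ Sg ∨ t⁻¹ ∈ Sg) ∧
      w.prod = g⁻¹ * h := by
  have hmem : g⁻¹ * h ∈ (Subgroup.closure Sg).toSubmonoid := hgen ▸ Subgroup.mem_top _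
  rw [Subgroup.closure_toSubmonoid] at hmem
  obtain ⟨w, hw, hprod⟩ := Submonoid.exists_list_of_mem_closure hmem
  exact Nat.sInf_mem (s := wordLengths Sg g h) ⟨w.length, w, rfl, hw, hprod⟩

theorem wordLengths_subset_wordLengths_swap (g h : G) :
    wordLengths Sg g h ⊆ wordLengths Sg h g := by
  rintro n ⟨w, rfl, hw, hprod⟩
  refine ⟨(w.map (·⁻¹)).reverse, by simp, fun t ht => ?_,
    by rw [← List.prod_inv_reverse, hprod]; group⟩
  simp only [List.mem_reverse, List.mem_map] at ht
  obtain ⟨u, hu, rfl⟩ := ht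
  simpa [or_comm] using hw u hu

theorem wordDist_comm (g h : G) : wordDist Sg g h = wordDist Sg h g := by
  rw [wordDist_eq_sInf_wordLengths, wordDist_eq_sInf_wordLengths,
    (wordLengths_subset_wordLengths_swap g h).antisymm (wordLengths_subset_wordLengths_swap h g)]

theorem wordDist_triangle (hgen : Subgroup.closure Sg = ⊤) (g h k : G) :
    wordDist Sg g k ≤ wordDist Sg g h + wordDist Sg h k := by
  obtain ⟨w₁, hl₁, hw₁, hp₁⟩ := exists_word_length_eq_wordDist hgen g h
  obtain ⟨w₂, hl₂, hw₂, hp₂⟩ := exists_word_length_eq_wordDist hgen h k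
  have hk : k = g * (w₁ ++ w₂).prod := by rw [List.prod_append, hp₁, hp₂]; group
  rw [← hl₁, ← hl₂, ← List.length_append, hk]
  exact wordDist_mul_prod_le (by simpa [or_imp, forall_and] using ⟨hw₁, hw₂⟩) g

theorem wordDist_eq_wordDist_one_inv_mul (g h : G) :
    wordDist Sg g h = wordDist Sg 1 (g⁻¹ * h) := by
  simp [wordDist]

theorem wball_finite (hgen : Subgroup.closure Sg = ⊤) (hfin : Sg.Finite) (g : G) (r : ℕ) :
    (wball Sg g r).Finite := by
  have : Finite ↥(Sg ∪ Sg⁻¹) := (hfin.union hfin.inv).to_subtype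
  refine ((List.finite_length_le ↥(Sg ∪ Sg⁻¹) r).image
    fun l => g * (l.map (↑)).prod).subset fun x (hx : wordDist Sg g x ≤ r) => ?_
  obtain ⟨w, hlen, hw, hprod⟩ := exists_word_length_eq_wordDist hgen g x
  lift w to List ↥(Sg ∪ Sg⁻¹) using hw
  refine ⟨w, ?_, by simp only [hprod]; group⟩
  rw [List.length_map] at hlen
  exact (hlen ▸ hx : w.length ≤ r)

theorem mem_smul_finset_of_wordDist_le [DecidableEq G] {K : Finset G} {R : ℕ}
    (hK : wball Sg 1 R ⊆ K) {x y : G} (hxy : wordDist Sg x y ≤ R) : y ∈ x • K :=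
  Finset.mem_smul_finset.2
    ⟨x⁻¹ * y, hK (show wordDist Sg 1 _ ≤ R by rwa [← wordDist_eq_wordDist_one_inv_mul]),
      by simp⟩

theorem exists_mem_rBoundary_of_word (hgen : Subgroup.closure Sg = ⊤) {F : Set G} {w : List G}
    (hw : ∀ t ∈ w, t ∈ Sg ∨ t⁻¹ ∈ Sg) {x : G} (hx : x ∈ F) (hy : x * w.prod ∉ F) :
    ∃ p ∈ rBoundary Sg 1 F,
      wordDist Sg p x ≤ w.length ∧ wordDist Sg p (x * w.prod) ≤ w.length := by
  induction w generalizing x with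
  | nil => simp [hx] at hy
  | cons s t ih =>
    have ht : ∀ u ∈ t, u ∈ Sg ∨ u⁻¹ ∈ Sg := fun u hu => hw u (List.mem_cons_of_mem s hu)
    have hstep : wordDist Sg x (x * s) ≤ 1 := by
      simpa using wordDist_mul_prod_le (w := [s]) (by simpa using hw s List.mem_cons_self) x
    rw [List.prod_cons, ← mul_assoc] at hy ⊢
    by_cases hxs : x * s ∈ F
    · obtain ⟨p, hp, hpx, hpy⟩ := ih ht hxs hy
      refine ⟨p, hp, ?_, hpy.trans (by simp)⟩
      calc wordDist Sg p x ≤ wordDist Sg p (x * s) + wordDist Sg (x * s) x :=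
            wordDist_triangle hgen _ _ _
        _ ≤ t.length + 1 := add_le_add hpx (wordDist_comm x (x * s) ▸ hstep)
        _ = (s :: t).length := rfl
    · refine ⟨x * s, ⟨hxs, x, hx, hstep⟩, ?_, (wordDist_mul_prod_le ht _).trans (by simp)⟩
      rw [wordDist_comm]
      exact hstep.trans (by simp)

theorem exists_mem_rBoundary_wordDist_le (hgen : Subgroup.closure Sg = ⊤) {F : Set G}
    {x y : G} (hx : x ∈ F) (hy : y ∉ F) :
    ∃ p ∈ rBoundary Sg 1 F, wordDist Sg p x ≤ wordDist Sg x y ∧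
      wordDist Sg p y ≤ wordDist Sg x y := by
  obtain ⟨w, hlen, hw, hprod⟩ := exists_word_length_eq_wordDist hgen x y
  obtain rfl : y = x * w.prod := by rw [hprod]; group
  rw [← hlen]
  exact exists_mem_rBoundary_of_word hgen hw hx hy

theorem rBoundary_finite (hgen : Subgroup.closure Sg = ⊤) (hfin : Sg.Finite) (F : Finset G)
    (r : ℕ) : (rBoundary Sg r (F : Set G)).Finite :=
  (F.finite_toSet.biUnion fun a _ => wball_finite hgen hfin a r).subset
    fun _ ⟨_, _, ha, hd⟩ => Set.mem_biUnion ha hd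

theorem card_le_ncard_rBoundary_mul_sq [DecidableEq G] (hgen : Subgroup.closure Sg = ⊤)
    (hfin : Sg.Finite) {F K : Finset G} {R : ℕ} (hK : wball Sg 1 R ⊆ K) {T : Finset (G × G)}
    (hT : ∀ q ∈ T, q.1 ∈ F ∧ q.2 ∉ F ∧ wordDist Sg q.1 q.2 ≤ R) :
    T.card ≤ (rBoundary Sg 1 (F : Set G)).ncard * K.card ^ 2 := by
  set D := (rBoundary_finite hgen hfin F 1).toFinset
  have hcover : T ⊆ D.biUnion fun p => (p • K) ×ˢ (p • K) := by
    rintro ⟨x, y⟩ hxy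
    obtain ⟨hx, hy, hd⟩ := hT _ hxy
    obtain ⟨p, hp, hpx, hpy⟩ :=
      exists_mem_rBoundary_wordDist_le hgen (F := F) (Finset.mem_coe.2 hx) (by simpa using hy)
    exact Finset.mem_biUnion.2 ⟨p, by simpa [D] using hp, Finset.mem_product.2
      ⟨mem_smul_finset_of_wordDist_le hK (hpx.trans hd),
        mem_smul_finset_of_wordDist_le hK (hpy.trans hd)⟩⟩
  calc T.card ≤ ∑ p ∈ D, ((p • K) ×ˢ (p • K)).card :=
        (Finset.card_le_card hcover).trans Finset.card_biUnion_le
    _ = (rBoundary Sg 1 (F : Set G)).ncard * K.card ^ 2 := by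
        simp [Finset.card_smul_finset, sq, D,
          Set.ncard_eq_toFinset_card _ (rBoundary_finite hgen hfin F 1)]

theorem IsUFBoundary.exists_abs_sum_le (hgen : Subgroup.closure Sg = ⊤) (hfin : Sg.Finite)
    {c : G → ℝ} (hc : IsUFBoundary Sg c) :
    ∃ M : ℝ, ∀ F : Finset G, |∑ x ∈ F, c x| ≤ M * (rBoundary Sg 1 (F : Set G)).ncard := by
  classical
  obtain ⟨b, ⟨C, hC⟩, ⟨R, hR⟩, hcb⟩ := hc
  set K := (wball_finite hgen hfin 1 R).toFinset
  have hK : wball Sg 1 R ⊆ K := by simp [K]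
  refine ⟨2 * C * K.card ^ 2, fun F => ?_⟩
  set U := F ∪ F.biUnion (· • K)
  set T := (F ×ˢ (U \ F)).filter fun q => wordDist Sg q.1 q.2 ≤ R
  have hU : ∀ x ∈ F, ∀ y ∉ U, b (y, x) = 0 ∧ b (x, y) = 0 := fun x hx y hy => by
    have hfar : R < wordDist Sg x y := not_le.1 fun h => hy (Finset.mem_union_right _
      (Finset.mem_biUnion.2 ⟨x, hx, mem_smul_finset_of_wordDist_le hK h⟩))
    exact ⟨hR (y, x) (wordDist_comm x y ▸ hfar), hR (x, y) hfar⟩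
  have hnear : ∀ q ∈ F ×ˢ (U \ F), b (q.2, q.1) - b (q.1, q.2) ≠ 0 →
      wordDist Sg q.1 q.2 ≤ R := fun q _ hne => by
    by_contra hfar
    rw [not_le] at hfar
    rw [hR q hfar, hR (q.2, q.1) (wordDist_comm q.1 q.2 ▸ hfar), sub_zero] at hne
    exact hne rfl
  have hsum : ∑ x ∈ F, c x = ∑ q ∈ T, (b (q.2, q.1) - b (q.1, q.2)) := by
    rw [Finset.sum_congr rfl fun x _ => hcb x,
      sum_finsum_sub_finsum_eq_sum_sdiff b Finset.subset_union_left hU,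
      ← Finset.sum_product', Finset.sum_filter_of_ne hnear]
  have hT : T.card ≤ (rBoundary Sg 1 (F : Set G)).ncard * K.card ^ 2 :=
    card_le_ncard_rBoundary_mul_sq hgen hfin hK fun q hq => by
      simp only [T, Finset.mem_filter, Finset.mem_product, Finset.mem_sdiff] at hq
      exact ⟨hq.1.1, hq.1.2.2, hq.2⟩
  have hC0 : 0 ≤ C := (abs_nonneg _).trans (hC (1, 1))
  calc |∑ x ∈ F, c x| ≤ ∑ q ∈ T, |b (q.2, q.1) - b (q.1, q.2)| :=
        hsum ▸ Finset.abs_sum_le_sum_abs _ _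
    _ ≤ ∑ q ∈ T, 2 * C := Finset.sum_le_sum fun q _ =>
        (abs_sub _ _).trans (by linarith [hC (q.2, q.1), hC (q.1, q.2)])
    _ = T.card * (2 * C) := by rw [Finset.sum_const, nsmul_eq_mul]
    _ ≤ ((rBoundary Sg 1 (F : Set G)).ncard * K.card ^ 2 : ℕ) * (2 * C) := by gcongr
    _ = 2 * C * K.card ^ 2 * (rBoundary Sg 1 (F : Set G)).ncard := by push_cast; ring

end WordMetric

section Growth
variable {α 𝕜 : Type*} [NormedField 𝕜] {l : Filter α} {B : ℕ → α → 𝕜}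

theorem isLittleO_of_forall_isLittleO_succ (hB : ∀ n, B n =o[l] B (n + 1)) {i m : ℕ}
    (him : i < m) : B i =o[l] B m := by
  induction m, him using Nat.le_induction with
  | base => exact hB i
  | succ m _ ih => exact ih.trans (hB m)

theorem coeff_eq_zero_of_sum_isBigO {σ : α → ℝ} (hB : ∀ n, B n =o[l] B (n + 1))
    (hσ : σ =o[l] B 0) (hne : ∀ n, ∃ᶠ x in l, B n x ≠ 0) :
    ∀ {N : ℕ} (a : Fin N → 𝕜), (fun x => ∑ i, a i * B i x) =O[l] σ → ∀ i, a i = 0 := by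
  have hσB : ∀ m, σ =o[l] B m := fun m => by
    rcases m.eq_zero_or_pos with rfl | hm
    exacts [hσ, hσ.trans (isLittleO_of_forall_isLittleO_succ hB hm)]
  intro N
  induction N with
  | zero => exact fun _ _ i => i.elim0
  | succ N ih =>
    intro a ha
    have hlower : (fun x => ∑ i : Fin N, a i.castSucc * B i x) =o[l] B N :=
      IsLittleO.fun_sum fun i _ => (isLittleO_of_forall_isLittleO_succ hB i.isLt).const_mul_left _
    have hlast : a (Fin.last N) = 0 := by
      by_contra h
      have htop : (fun x => a (Fin.last N) * B N x) =o[l] B N := by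
        simpa [Fin.sum_univ_castSucc] using (ha.trans_isLittleO (hσB N)).sub hlower
      exact isLittleO_irrefl (hne N) ((isLittleO_const_mul_left_iff h).1 htop)
    have hinit := ih (fun i => a i.castSucc) (by simpa [Fin.sum_univ_castSucc, hlast] using ha)
    exact Fin.lastCases hlast hinit

end Growth

theorem isLittleO_of_tendsto_div_abs {α : Type*} {l : Filter α} {f g : α → ℝ}
    (hg : ∀ᶠ x in l, g x ≠ 0) (h : Tendsto (fun x => f x / |g x|) l (𝓝 0)) : f =o[l] g := by
  rw [← isLittleO_abs_right,
    isLittleO_iff_tendsto' (hg.mono fun x hx h0 => absurd h0 (abs_ne_zero.2 hx))]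
  exact h

theorem linear_independence_of_growth_general {G : Type*} [Group G]
    (Sg : Finset G) (hgen : Subgroup.closure (Sg : Set G) = ⊤)
    (S : ℕ → Finset G)
    (c : ℕ → G → ℝ)
    (β : ℕ → ℕ → ℝ) (hβ : ∀ n j, β n j = |∑ s ∈ S j, c n s| / (S j).card)
    (σ : ℕ → ℝ)
    (hσ : ∀ j, σ j = ((rBoundary (Sg : Set G) 1 (S j : Set G)).ncard : ℝ) / (S j).card)
    (hpos : ∀ n, ∀ᶠ j in Filter.atTop, 0 < β n j)
    (h0 : Filter.Tendsto (fun j => σ j / β 0 j) Filter.atTop (nhds 0))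
    (hmono : ∀ n, Filter.Tendsto (fun j => β n j / β (n + 1) j) Filter.atTop (nhds 0)) :
    ∀ (N : ℕ) (a : Fin N → ℝ),
      IsUFBoundary (Sg : Set G) (fun g => ∑ i, a i * c i g) → ∀ i, a i = 0 := by
  intro N a ha
  obtain ⟨M, hM⟩ := ha.exists_abs_sum_le hgen Sg.finite_toSet
  set B : ℕ → ℕ → ℝ := fun n j => (∑ s ∈ S j, c n s) / (S j).card
  have hβB : ∀ n j, β n j = |B n j| := fun n j => by simp [hβ, B, abs_div]
  have hne : ∀ n, ∀ᶠ j in atTop, B n j ≠ 0 := fun n =>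
    (hpos n).mono fun j hj => abs_pos.1 (hβB n j ▸ hj)
  have hσB : σ =o[atTop] B 0 := isLittleO_of_tendsto_div_abs (hne 0) (by simpa [hβB] using h0)
  have hBB : ∀ n, B n =o[atTop] B (n + 1) := fun n => isLittleO_abs_left.1 <|
    isLittleO_of_tendsto_div_abs (hne (n + 1)) (by simpa [hβB] using hmono n)
  have hbound : (fun j => ∑ i, a i * B i j) =O[atTop] σ := by
    refine IsBigO.of_bound M (Eventually.of_forall fun j => ?_)
    have hσj : 0 ≤ σ j := hσ j ▸ by positivity
    have hsum : ∑ i, a i * B i j = (∑ g ∈ S j, ∑ i, a i * c i g) / (S j).card := by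
      simp only [B, mul_div_assoc', Finset.sum_div, Finset.mul_sum]
      exact Finset.sum_comm
    rw [Real.norm_eq_abs, Real.norm_eq_abs, abs_of_nonneg hσj, hsum, abs_div, Nat.abs_cast, hσ,
      mul_div_assoc']
    exact div_le_div_of_nonneg_right (hM (S j)) (Nat.cast_nonneg _)
  exact coeff_eq_zero_of_sum_isBigO hBB hσB (fun n => (hne n).frequently) a hbound

/-- Let `G` be finitely generated amenable with Følner sequence `S`, and
`(c_n)` a sequence of bounded functions with `σ ≺ β₀` and `β_n ≺ β_{n+1}` (where
`β_n(j) = |∑_{s∈S_j} c_n(s)|/|S_j|` and `σ(j) = |∂₁S_j|/|S_j|`). Then the classes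
`[c_n]` are linearly independent in `H₀^{uf}(G;ℝ)`: no nontrivial finite real linear
combination of the `c_n` is a uniformly finite boundary. -/
theorem linear_independence_of_growth {G : Type*} [Group G]
    (Sg : Finset G) (hgen : Subgroup.closure (Sg : Set G) = ⊤)
    (S : ℕ → Finset G) (hS : IsFolner (Sg : Set G) S)
    (c : ℕ → G → ℝ) (hc : ∀ n, ∃ C : ℝ, ∀ g, |c n g| ≤ C)
    (β : ℕ → ℕ → ℝ) (hβ : ∀ n j, β n j = |∑ s ∈ S j, c n s| / (S j).card)
    (σ : ℕ → ℝ)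
    (hσ : ∀ j, σ j = ((rBoundary (Sg : Set G) 1 (S j : Set G)).ncard : ℝ) / (S j).card)
    (hpos : ∀ n, ∀ᶠ j in Filter.atTop, 0 < β n j)
    (h0 : Filter.Tendsto (fun j => σ j / β 0 j) Filter.atTop (nhds 0))
    (hmono : ∀ n, Filter.Tendsto (fun j => β n j / β (n + 1) j) Filter.atTop (nhds 0)) :
    ∀ (N : ℕ) (a : Fin N → ℝ),
      IsUFBoundary (Sg : Set G) (fun g => ∑ i, a i * c i g) → ∀ i, a i = 0 :=
  linear_independence_of_growth_general Sg hgen S c β hβ σ hσ hpos h0 hmono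
end
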